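/- arXiv:2405.11548 — 7 statements merged into one kernel-verified Lean document; each statement's English description precedes it below -/
import Mathlib

section
/- Let P and Q be two probability measures on a measurable space (Ω, F), and let E ∈ F be an arbitrary event. Then P(E) + Q(Ω \ E) ≥ (1/2) · exp(−KL(P‖Q)), where KL denotes the Kullback–Leibler divergence. -/
open MeasureTheory

-- The Kullback–Leibler divergence of `P` with respect to `Q`: the integral of
-- the log-likelihood ratio under `P` when `P ≪ Q` (and the log-likelihood
-- ratio is integrable), and `+∞` otherwise.
open Classical in
noncomputable def klDivergence {Ω : Type*} [MeasurableSpace Ω]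
    (P Q : Measure Ω) : EReal :=
  if P ≪ Q ∧ Integrable (llr P Q) P then ((∫ ω, llr P Q ω ∂P : ℝ) : EReal) else ⊤

open Classical in
/-- **Bretagnolle–Huber inequality.** For probability measures `P, Q` and any
measurable event `E`, `P(E) + Q(Eᶜ) ≥ (1/2)·exp(−KL(P‖Q))` (the right-hand
side being `0` when `KL(P‖Q) = +∞`). -/
theorem stmt_0 {Ω : Type*} [MeasurableSpace Ω]
    (P Q : Measure Ω) [IsProbabilityMeasure P] [IsProbabilityMeasure Q]
    (E : Set Ω) (hE : MeasurableSet E) :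
    (if klDivergence P Q = ⊤ then 0
      else ENNReal.ofReal ((1 / 2) * Real.exp (-(klDivergence P Q).toReal)))
      ≤ P E + Q Eᶜ := by
  by_cases h : klDivergence P Q = ⊤
  · simp [h]
  rw [if_neg h]
  have hc : P ≪ Q ∧ Integrable (llr P Q) P := by
    by_contra hc
    exact h (by simp [klDivergence, hc])
  obtain ⟨hac, hint⟩ := hc
  have hkl : klDivergence P Q = ((∫ ω, llr P Q ω ∂P : ℝ) : EReal) := by
    simp [klDivergence, hac, hint]
  rw [hkl, EReal.toReal_coe]
  set KL := ∫ ω, llr P Q ω ∂P with hKL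
  set f := P.rnDeriv Q with hf
  have hfm : Measurable f := Measure.measurable_rnDeriv P Q
  set m := ∫⁻ ω, min (f ω) 1 ∂Q with hm
  set M := ∫⁻ ω, max (f ω) 1 ∂Q with hM
  set S := ∫⁻ ω, f ω ^ (1/2 : ℝ) ∂Q with hS
  have hfint : ∫⁻ ω, f ω ∂Q = 1 := by
    rw [Measure.lintegral_rnDeriv hac]; simp
  -- m ≤ P E + Q Eᶜ
  have h3 : m ≤ P E + Q Eᶜ := by
    rw [hm, ← lintegral_add_compl (fun ω => min (f ω) 1) hE]
    gcongr
    · calc ∫⁻ ω in E, min (f ω) 1 ∂Q ≤ ∫⁻ ω in E, f ω ∂Q :=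
        lintegral_mono fun ω => min_le_left _ _
      _ = P E := Measure.setLIntegral_rnDeriv hac E
    · calc ∫⁻ ω in Eᶜ, min (f ω) 1 ∂Q ≤ ∫⁻ ω in Eᶜ, 1 ∂Q :=
        lintegral_mono fun ω => min_le_right _ _
      _ = Q Eᶜ := by simp
  have hm1 : m ≤ 1 := by
    rw [hm]
    calc ∫⁻ ω, min (f ω) 1 ∂Q ≤ ∫⁻ _, 1 ∂Q := lintegral_mono fun ω => min_le_right _ _
    _ = 1 := by simp
  -- m + M = 2
  have hmM : m + M = 2 := by
    rw [hm, hM, ← lintegral_add_left (hfm.min measurable_const)]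
    have : ∀ ω, min (f ω) 1 + max (f ω) 1 = f ω + 1 := fun ω => min_add_max _ _
    simp_rw [this]
    rw [lintegral_add_right _ measurable_const, hfint, lintegral_one, measure_univ]
    exact one_add_one_eq_two
  have hM2 : M ≤ 2 := hmM ▸ le_add_self
  -- Cauchy–Schwarz: S ≤ m^(1/2) * M^(1/2)
  have hCS : S ≤ m ^ (1/2 : ℝ) * M ^ (1/2 : ℝ) := by
    have h22 : (2 : ℝ).HolderConjugate 2 := by constructor <;> norm_num
    have := ENNReal.lintegral_mul_le_Lp_mul_Lq Q h22
      (f := fun ω => min (f ω) 1 ^ (1/2 : ℝ)) (g := fun ω => max (f ω) 1 ^ (1/2 : ℝ))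
      ((hfm.min measurable_const).pow_const _).aemeasurable
      ((hfm.max measurable_const).pow_const _).aemeasurable
    have heq : ∀ ω, min (f ω) 1 ^ (1/2 : ℝ) * max (f ω) 1 ^ (1/2 : ℝ)
        = f ω ^ (1/2 : ℝ) := by
      intro ω
      rw [← ENNReal.mul_rpow_of_nonneg _ _ (by norm_num), min_mul_max, mul_one]
    have hpow : ∀ a : ENNReal, (a ^ (1/2 : ℝ)) ^ (2 : ℝ) = a := by
      intro a
      rw [← ENNReal.rpow_mul]
      norm_num
    simp only [Pi.mul_apply] at this
    simp_rw [heq, hpow] at this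
    rw [← hm, ← hM, ← hS] at this
    exact this
  have hScs : S ≤ m ^ (1/2 : ℝ) * 2 ^ (1/2 : ℝ) := by
    refine hCS.trans ?_
    gcongr
  have hmne : m ≠ ⊤ := (hm1.trans_lt (by norm_num)).ne
  have hSne : S ≠ ⊤ := by
    refine ne_top_of_le_ne_top (ENNReal.mul_ne_top ?_ ?_) hScs
    · exact ENNReal.rpow_ne_top_of_nonneg (by norm_num) hmne
    · exact ENNReal.rpow_ne_top_of_nonneg (by norm_num) (by norm_num)
  -- change of variables: ∫⁻ ofReal (exp (-llr/2)) ∂P = S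
  have hcov : ∫⁻ ω, ENNReal.ofReal (Real.exp (-llr P Q ω / 2)) ∂P = S := by
    have h1 : ∫⁻ ω, ENNReal.ofReal (Real.exp (-llr P Q ω / 2)) ∂(Q.withDensity (P.rnDeriv Q))
        = ∫⁻ ω, (P.rnDeriv Q * fun ω => ENNReal.ofReal (Real.exp (-llr P Q ω / 2))) ω ∂Q :=
      lintegral_withDensity_eq_lintegral_mul _ (Measure.measurable_rnDeriv P Q)
        ((measurable_llr P Q).neg.div_const 2).exp.ennreal_ofReal
    rw [Measure.withDensity_rnDeriv_eq _ _ hac] at h1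
    rw [h1, hS]
    simp only [Pi.mul_apply]
    refine lintegral_congr_ae ?_
    filter_upwards [Measure.rnDeriv_lt_top P Q] with ω hω
    show f ω * ENNReal.ofReal (Real.exp (-Real.log (f ω).toReal / 2)) = f ω ^ (1/2 : ℝ)
    rcases eq_or_ne (f ω) 0 with h0 | h0
    · simp [h0, ENNReal.zero_rpow_of_pos (by norm_num : (0:ℝ) < 1/2)]
    · set a := (f ω).toReal with ha
      have hapos : 0 < a := ENNReal.toReal_pos h0 hω.ne
      have hfa : f ω = ENNReal.ofReal a := by
        rw [ha, ENNReal.ofReal_toReal hω.ne]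
      have hexp : Real.exp (-Real.log a / 2) = a ^ (-(1/2) : ℝ) := by
        rw [Real.rpow_def_of_pos hapos]
        ring_nf
      rw [hfa, hexp, ← ENNReal.ofReal_mul hapos.le,
        ENNReal.ofReal_rpow_of_pos hapos]
      congr 1
      nth_rewrite 1 [← Real.rpow_one a]
      rw [← Real.rpow_add hapos]
      norm_num
  -- Jensen
  have hgmeas : Measurable fun ω => Real.exp (-llr P Q ω / 2) :=
    ((measurable_llr P Q).neg.div_const 2).exp
  have hgi : Integrable (fun ω => Real.exp (-llr P Q ω / 2)) P := by
    refine ⟨hgmeas.aestronglyMeasurable, ?_⟩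
    rw [hasFiniteIntegral_iff_ofReal (ae_of_all _ fun ω => (Real.exp_pos _).le)]
    rw [hcov]
    exact hSne.lt_top
  have hfi : Integrable (fun ω => -llr P Q ω / 2) P := (hint.neg).div_const 2
  have hJ : Real.exp (-KL / 2) ≤ ∫ ω, Real.exp (-llr P Q ω / 2) ∂P := by
    have := convexOn_exp.map_integral_le (f := fun ω => -llr P Q ω / 2) (μ := P)
      Real.continuous_exp.continuousOn isClosed_univ
      (Filter.Eventually.of_forall fun x => Set.mem_univ _) hfi hgi
    have hIeq : ∫ ω, -llr P Q ω / 2 ∂P = -KL / 2 := by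
      rw [integral_div, integral_neg]
    rwa [hIeq] at this
  have hint_eq : ∫ ω, Real.exp (-llr P Q ω / 2) ∂P = S.toReal := by
    rw [integral_eq_lintegral_of_nonneg_ae (ae_of_all _ fun ω => (Real.exp_pos _).le)
      hgmeas.aestronglyMeasurable, hcov]
  -- combine
  have hkey : ENNReal.ofReal (Real.exp (-KL / 2)) ≤ S := by
    rw [hint_eq] at hJ
    exact ENNReal.ofReal_le_of_le_toReal hJ
  have hsq : ENNReal.ofReal (Real.exp (-KL)) ≤ 2 * m := by
    have h1 : ENNReal.ofReal (Real.exp (-KL)) = ENNReal.ofReal (Real.exp (-KL / 2)) *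
        ENNReal.ofReal (Real.exp (-KL / 2)) := by
      rw [← ENNReal.ofReal_mul (Real.exp_pos _).le, ← Real.exp_add]
      ring_nf
    have h2 : S * S ≤ 2 * m := by
      calc S * S ≤ (m ^ (1/2 : ℝ) * 2 ^ (1/2 : ℝ)) * (m ^ (1/2 : ℝ) * 2 ^ (1/2 : ℝ)) :=
            mul_le_mul' hScs hScs
        _ = (m ^ (1/2 : ℝ) * m ^ (1/2 : ℝ)) * (2 ^ (1/2 : ℝ) * 2 ^ (1/2 : ℝ)) := by ring
        _ = m * 2 := by
            rw [← ENNReal.rpow_add_of_nonneg _ _ (by norm_num) (by norm_num),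
              ← ENNReal.rpow_add_of_nonneg _ _ (by norm_num) (by norm_num)]
            norm_num
        _ = 2 * m := mul_comm _ _
    rw [h1]
    exact (mul_le_mul' hkey hkey).trans h2
  calc ENNReal.ofReal (1 / 2 * Real.exp (-KL))
      = ENNReal.ofReal (1 / 2) * ENNReal.ofReal (Real.exp (-KL)) := by
        rw [ENNReal.ofReal_mul (by norm_num)]
    _ ≤ ENNReal.ofReal (1 / 2) * (2 * m) := mul_le_mul_right hsq _
    _ = m := by
        rw [← mul_assoc]
        have : ENNReal.ofReal (1 / 2) * 2 = 1 := by
          rw [ENNReal.ofReal_div_of_pos (by norm_num)]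
          simp
          rw [ENNReal.inv_mul_cancel (by norm_num) (by norm_num)]
        rw [this, one_mul]
    _ ≤ P E + Q Eᶜ := h3
end

section
/- Let X₁, X₂, ... be i.i.d. random variables with values in a finite set A of cardinality a and common distribution Q. For each t, let the empirical distribution after n samples be Q̄ₙ(i) = (1/n)·#{j ≤ n : X_j = i}. Then for any n ≥ 1 and δ > 0, P(‖Q̄ₙ − Q‖₁ ≥ δ) ≤ (2^a − 2)·exp(−n δ²/2). -/
open Real MeasureTheory ProbabilityTheory Finset

/-!
Write `f = Q̄ₙ - Q`. Since `∑ f = 0`, the L1 norm `∑ |f|` is twice the sum of `f` over the set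
`B = {f ≥ 0}`, and that set is neither empty nor all of `A` when `∑ |f| ≥ δ > 0`. So the event
`‖Q̄ₙ - Q‖₁ ≥ δ` is covered by the `2^a - 2` events `Q̄ₙ(B) - Q(B) ≥ δ/2`, `B` a nonempty proper
subset of `A`. For fixed `B`, `n (Q̄ₙ(B) - Q(B))` is a sum of `n` independent centred indicators
with values in an interval of length 1, and Hoeffding's inequality bounds each of these events by
`exp (-2 (nδ/2)² / n) = exp (-nδ²/2)`.
-/

section ZeroSum

variable {ι : Type*}

theorem sum_abs_eq_two_mul_sum_filter_nonneg {s : Finset ι} {f : ι → ℝ}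
    (hf : ∑ i ∈ s, f i = 0) : ∑ i ∈ s, |f i| = 2 * ∑ i ∈ s with 0 ≤ f i, f i := by
  have hsplit := sum_filter_add_sum_filter_not s (fun i => 0 ≤ f i) f
  rw [← sum_filter_add_sum_filter_not s (fun i => 0 ≤ f i) (fun i => |f i|),
    sum_congr rfl fun i hi => abs_of_nonneg (mem_filter.1 hi).2,
    sum_congr rfl fun i hi => abs_of_neg (not_le.1 (mem_filter.1 hi).2), sum_neg_distrib]
  linarith

variable (ι) [Fintype ι] [DecidableEq ι]

def nonemptyProperSubsets : Finset (Finset ι) := univ \ {∅, univ}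

theorem card_nonemptyProperSubsets [Nonempty ι] :
    (#(nonemptyProperSubsets ι) : ℝ) = 2 ^ Fintype.card ι - 2 := by
  have hne : (∅ : Finset ι) ≠ univ := (univ_nonempty (α := ι)).ne_empty.symm
  have h2 : 2 ≤ 2 ^ Fintype.card ι := Nat.le_self_pow Fintype.card_ne_zero 2
  rw [nonemptyProperSubsets, card_sdiff_of_subset (subset_univ _), card_univ,
    Fintype.card_finset, card_pair hne, Nat.cast_sub h2]
  push_cast
  ring

variable {ι}

theorem exists_mem_nonemptyProperSubsets_half_le_sum {f : ι → ℝ} (hf : ∑ i, f i = 0) {δ : ℝ}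
    (hδ : 0 < δ) (hfδ : δ ≤ ∑ i, |f i|) :
    ∃ B ∈ nonemptyProperSubsets ι, δ / 2 ≤ ∑ i ∈ B, f i := by
  rw [sum_abs_eq_two_mul_sum_filter_nonneg hf] at hfδ
  have hhalf : δ / 2 ≤ ∑ i with 0 ≤ f i, f i := by linarith
  refine ⟨_, mem_sdiff.2 ⟨mem_univ _, ?_⟩, hhalf⟩
  simp only [mem_insert, mem_singleton, not_or]
  constructor <;> intro h <;> rw [h] at hhalf
  · simp at hhalf; linarith
  · linarith [hf]

end ZeroSum

theorem sum_indicator_sub_eq_mul_sum_empirical_sub {A : Type*} [DecidableEq A] (x : ℕ → A)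
    (B : Finset A) (Q : A → ℝ) {n : ℕ} (hn : n ≠ 0) :
    ∑ j ∈ range n, ((B : Set A).indicator 1 (x j) - ∑ i ∈ B, Q i)
      = n * ∑ i ∈ B, ((#{j ∈ range n | x j = i} : ℝ) / n - Q i) := by
  simp only [sum_sub_distrib, sum_const, card_range, nsmul_eq_mul, Set.indicator_apply,
    mem_coe, Pi.one_apply, sum_boole, ← sum_card_fiberwise_eq_card_filter, Nat.cast_sum,
    ← sum_div]
  field_simp

theorem exists_mem_nonemptyProperSubsets_of_le_sum_abs_empirical_sub {A : Type*} [Fintype A]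
    [DecidableEq A] (x : ℕ → A) {Q : A → ℝ} (hQ1 : ∑ i, Q i = 1) {n : ℕ} (hn : n ≠ 0) {δ : ℝ}
    (hδ : 0 < δ) (hx : δ ≤ ∑ i, |(#{j ∈ range n | x j = i} : ℝ) / n - Q i|) :
    ∃ B ∈ nonemptyProperSubsets A,
      n * δ / 2 ≤ ∑ j ∈ range n, ((B : Set A).indicator 1 (x j) - ∑ i ∈ B, Q i) := by
  have hsum : ∑ i, ((#{j ∈ range n | x j = i} : ℝ) / n - Q i) = 0 := by
    have := sum_indicator_sub_eq_mul_sum_empirical_sub x univ Q hn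
    simpa [hQ1, hn] using this.symm
  obtain ⟨B, hB, hδB⟩ := exists_mem_nonemptyProperSubsets_half_le_sum hsum hδ hx
  refine ⟨B, hB, ?_⟩
  rw [sum_indicator_sub_eq_mul_sum_empirical_sub x B Q hn, mul_div_assoc]
  gcongr

theorem measureReal_sum_range_indicator_sub_ge_le {Ω A : Type*} {mΩ : MeasurableSpace Ω}
    [MeasurableSpace A] {μ : Measure Ω} [IsProbabilityMeasure μ] {X : ℕ → Ω → A}
    (hmeas : ∀ j, Measurable (X j)) (hindep : iIndepFun X μ) {B : Set A} (hB : MeasurableSet B)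
    {p : ℝ} (hp : ∀ j, μ.real (X j ⁻¹' B) = p) (n : ℕ) {ε : ℝ} (hε : 0 ≤ ε) :
    μ.real {ω | ε ≤ ∑ j ∈ range n, (B.indicator 1 (X j ω) - p)} ≤ exp (-2 * ε ^ 2 / n) := by
  have hind : Measurable (B.indicator (1 : A → ℝ)) := measurable_one.indicator hB
  have hsubG : ∀ j < n, HasSubgaussianMGF (fun ω => B.indicator 1 (X j ω) - p)
      ((‖(1 : ℝ) - 0‖₊ / 2) ^ 2) μ := by
    intro j _
    have hmean : μ[fun ω => B.indicator (1 : A → ℝ) (X j ω)] = p := by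
      rw [← hp j, ← integral_indicator_one ((hmeas j) hB)]
      rfl
    rw [← hmean]
    refine hasSubgaussianMGF_of_mem_Icc (hind.comp (hmeas j)).aemeasurable
      (ae_of_all _ fun ω => ?_)
    exact ⟨Set.indicator_nonneg (fun _ _ => zero_le_one) _,
      Set.indicator_le_self' (fun _ _ => zero_le_one) _⟩
  have := HasSubgaussianMGF.measure_sum_range_ge_le_of_iIndepFun
    (hindep.comp (fun _ a => B.indicator 1 a - p) fun _ => hind.sub_const p) hsubG hε
  refine this.trans_eq (congrArg exp ?_)
  rw [sub_zero, nnnorm_one]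
  push_cast
  ring

/-- **L1 deviation of the empirical distribution.**
For i.i.d. samples from a distribution `Q` on a finite set `A` with `|A| = a`,
the empirical distribution `Q̄ₙ` satisfies
`P(‖Q̄ₙ − Q‖₁ ≥ δ) ≤ (2^a − 2)·exp(−nδ²/2)`. -/
theorem stmt_2 {Ω : Type*} {mΩ : MeasurableSpace Ω}
    (μ : Measure Ω) [IsProbabilityMeasure μ]
    {A : Type*} [Fintype A] [DecidableEq A] [MeasurableSpace A]
    [MeasurableSingletonClass A]
    (X : ℕ → Ω → A)
    (hmeas : ∀ j, Measurable (X j))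
    (hindep : iIndepFun X μ)
    (Q : A → ℝ) (hQ0 : ∀ i, 0 ≤ Q i) (hQ1 : ∑ i, Q i = 1)
    (hdist : ∀ j i, μ {ω | X j ω = i} = ENNReal.ofReal (Q i))
    (n : ℕ) (hn : 1 ≤ n) (δ : ℝ) (hδ : 0 < δ) :
    μ {ω | δ ≤ ∑ i,
        |(((Finset.range n).filter (fun j => X j ω = i)).card : ℝ) / n - Q i|}
      ≤ ENNReal.ofReal ((2 ^ (Fintype.card A) - 2) * Real.exp (-(n : ℝ) * δ ^ 2 / 2)) := by
  rcases isEmpty_or_nonempty A with hA | hA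
  · simp [hδ.not_ge]
  have hn0 : n ≠ 0 := Nat.one_le_iff_ne_zero.1 hn
  set E : Finset A → Set Ω := fun B =>
    {ω | n * δ / 2 ≤ ∑ j ∈ range n, ((B : Set A).indicator 1 (X j ω) - ∑ i ∈ B, Q i)}
  have hcover : {ω | δ ≤ ∑ i, |(#{j ∈ range n | X j ω = i} : ℝ) / n - Q i|}
      ⊆ ⋃ B ∈ nonemptyProperSubsets A, E B := fun ω hω => by
    obtain ⟨B, hB, hδB⟩ :=
      exists_mem_nonemptyProperSubsets_of_le_sum_abs_empirical_sub (X · ω) hQ1 hn0 hδ hω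
    exact Set.mem_biUnion hB hδB
  have hE : ∀ B : Finset A, μ.real (E B) ≤ exp (-n * δ ^ 2 / 2) := by
    intro B
    have hp : ∀ j, μ.real (X j ⁻¹' B) = ∑ i ∈ B, Q i := fun j => by
      rw [← sum_measureReal_preimage_singleton B fun i _ => hmeas j (measurableSet_singleton i)]
      refine sum_congr rfl fun i _ => ?_
      rw [measureReal_def, ← ENNReal.toReal_ofReal (hQ0 i), ← hdist j i]
      rfl
    refine (measureReal_sum_range_indicator_sub_ge_le hmeas hindep B.measurableSet hp n
      (by positivity)).trans_eq (congrArg exp ?_)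
    field_simp
  have hreal := calc
    μ.real {ω | δ ≤ ∑ i, |(#{j ∈ range n | X j ω = i} : ℝ) / n - Q i|}
      ≤ μ.real (⋃ B ∈ nonemptyProperSubsets A, E B) := measureReal_mono hcover (measure_ne_top _ _)
    _ ≤ ∑ B ∈ nonemptyProperSubsets A, μ.real (E B) := measureReal_biUnion_finset_le _ _
    _ ≤ ∑ B ∈ nonemptyProperSubsets A, exp (-n * δ ^ 2 / 2) := sum_le_sum fun B _ => hE B
    _ = (2 ^ Fintype.card A - 2) * exp (-n * δ ^ 2 / 2) := by
      rw [sum_const, nsmul_eq_mul, card_nonemptyProperSubsets]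
  rw [← ofReal_measureReal]
  exact ENNReal.ofReal_le_ofReal hreal
end

section
/- Consider a sequential allocation process over a finite set I of actions. At each time t a weight vector α_t ∈ Δ(I) (the probability simplex over I) is produced, and the action s_t = argmax_{s∈I} (Σ_{i=1}^t α_{s,i}) / N_t(s) is selected (unless forced exploration selects the least-selected action when min_s N_t(s) < √t). Each action is selected once in the first |I| steps. Then for any t ≥ |I| and any s ∈ I: Σ_{i=1}^t α_{s,i} − (|I| − 1)(√t + 2) ≤ N_t(s) ≤ max{1 + Σ_{i=1}^t α_{s,i}, √t + 1}. -/
open Finset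

/-- **Tracking lemma for allocation matching.**
If each action is selected once in the first `|I|` steps and thereafter the
least-selected action is chosen when `min_s N_t(s) < √t` (forced exploration)
and otherwise `argmax_s (Σ_{i≤t} α_{s,i})/N_t(s)` is chosen (allocation
matching), then for all `t ≥ |I|` and all `s`:
`Σ_{i≤t} α_{s,i} − (|I|−1)(√t+2) ≤ N_t(s) ≤ max{1 + Σ_{i≤t} α_{s,i}, √t+1}`. -/
theorem stmt_5 {I : Type*} [Fintype I] [DecidableEq I] [Nonempty I]
    (sel : ℕ → I) (α : ℕ → I → ℝ)
    (hα0 : ∀ i s, 0 ≤ α i s) (hα1 : ∀ i, ∑ s, α i s = 1)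
    (N : ℕ → I → ℕ)
    (hN : ∀ t s, N t s = ((Finset.range t).filter (fun j => sel j = s)).card)
    (hinit : ∀ s : I, ∃ j < Fintype.card I, sel j = s)
    (hforce : ∀ t : ℕ, Fintype.card I ≤ t →
      ((Finset.univ.inf' Finset.univ_nonempty (fun s => N t s) : ℕ) : ℝ) < Real.sqrt t →
      N t (sel t) = Finset.univ.inf' Finset.univ_nonempty (fun s => N t s))
    (hmatch : ∀ t : ℕ, Fintype.card I ≤ t →
      ¬ (((Finset.univ.inf' Finset.univ_nonempty (fun s => N t s) : ℕ) : ℝ) < Real.sqrt t) →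
      ∀ s : I,
        (∑ i ∈ Finset.range t, α i s) / (N t s : ℝ)
          ≤ (∑ i ∈ Finset.range t, α i (sel t)) / (N t (sel t) : ℝ)) :
    ∀ t : ℕ, Fintype.card I ≤ t → ∀ s : I,
      (∑ i ∈ Finset.range t, α i s) - ((Fintype.card I : ℝ) - 1) * (Real.sqrt t + 2)
        ≤ (N t s : ℝ) ∧
      (N t s : ℝ) ≤ max (1 + ∑ i ∈ Finset.range t, α i s) (Real.sqrt t + 1) := by
  classical
  have hK1 : 1 ≤ Fintype.card I := Fintype.card_pos
  have hsumN : ∀ t, ∑ s, N t s = t := by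
    intro t
    simp only [hN]
    have h := Finset.card_eq_sum_card_fiberwise
      (s := Finset.range t) (t := Finset.univ) (f := sel)
      (fun x _ => Finset.mem_univ (sel x))
    rw [← h, Finset.card_range]
  have hsumNR : ∀ t, ∑ s, (N t s : ℝ) = t := by
    intro t; exact_mod_cast congrArg (Nat.cast : ℕ → ℝ) (hsumN t)
  have hsumα : ∀ t, ∑ s, ∑ i ∈ Finset.range t, α i s = t := by
    intro t
    rw [Finset.sum_comm]
    simp [hα1]
  have hmono : ∀ t s, ∑ i ∈ Finset.range t, α i s ≤ ∑ i ∈ Finset.range (t+1), α i s := by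
    intro t s; rw [Finset.sum_range_succ]; linarith [hα0 t s]
  have hsq : ∀ t : ℕ, Real.sqrt t ≤ Real.sqrt (t+1) := by
    intro t; apply Real.sqrt_le_sqrt; push_cast; linarith
  have hNsucc : ∀ t s, N (t+1) s = N t s + (if sel t = s then 1 else 0) := by
    intro t s
    rw [hN, hN, Finset.range_add_one, Finset.filter_insert]
    by_cases h : sel t = s
    · rw [if_pos h, Finset.card_insert_of_notMem (fun hc =>
        (Finset.notMem_range_self) (Finset.mem_of_mem_filter _ hc))]
      simp [h]
    · simp [h]
  have hub : ∀ t, Fintype.card I ≤ t → ∀ s,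
      (N t s : ℝ) ≤ max (1 + ∑ i ∈ Finset.range t, α i s) (Real.sqrt t + 1) := by
    intro t ht
    induction t, ht using Nat.le_induction with
    | base =>
      intro s
      have h1 : ∀ s : I, 1 ≤ N (Fintype.card I) s := by
        intro s
        obtain ⟨j, hj, hjs⟩ := hinit s
        rw [hN]
        refine Finset.card_pos.mpr ⟨j, ?_⟩
        simp [hj, hjs]
      have hle : N (Fintype.card I) s ≤ 1 := by
        by_contra h
        push_neg at h
        have hlt : Fintype.card I < ∑ s', N (Fintype.card I) s' := by
          calc Fintype.card I = ∑ _s : I, 1 := by simp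
          _ < ∑ s', N (Fintype.card I) s' :=
            Finset.sum_lt_sum (fun i _ => h1 i) ⟨s, Finset.mem_univ s, h⟩
        rw [hsumN] at hlt
        omega
      have heq : N (Fintype.card I) s = 1 := le_antisymm hle (h1 s)
      rw [heq]
      refine le_max_of_le_right ?_
      have := Real.sqrt_nonneg (Fintype.card I : ℝ)
      push_cast
      linarith
    | succ t ht IH =>
      intro s
      by_cases hs : sel t = s
      · have hv : N (t+1) s = N t s + 1 := by rw [hNsucc]; simp [hs]
        by_cases hf : ((Finset.univ.inf' Finset.univ_nonempty (fun s => N t s) : ℕ) : ℝ)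
            < Real.sqrt t
        · have hNt : N t s = Finset.univ.inf' Finset.univ_nonempty (fun s => N t s) := by
            rw [← hs]; exact hforce t ht hf
          refine le_max_of_le_right ?_
          rw [hv]
          push_cast
          rw [hNt]
          have := hsq t
          push_cast at this
          linarith
        · have hmin : Real.sqrt t ≤
              ((Finset.univ.inf' Finset.univ_nonempty (fun s => N t s) : ℕ) : ℝ) :=
            not_lt.mp hf
          have ht1 : (1:ℝ) ≤ Real.sqrt t := by
            rw [show (1:ℝ) = Real.sqrt 1 by simp]
            apply Real.sqrt_le_sqrt
            exact_mod_cast le_trans hK1 ht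
          have hpos : ∀ s', (0:ℝ) < N t s' := by
            intro s'
            have hle' : ((Finset.univ.inf' Finset.univ_nonempty (fun s => N t s) : ℕ) : ℝ)
                ≤ (N t s' : ℝ) := by
              exact_mod_cast Finset.inf'_le _ (Finset.mem_univ s')
            linarith
          have hex : ∃ s', (N t s' : ℝ) ≤ ∑ i ∈ Finset.range t, α i s' := by
            by_contra h
            push_neg at h
            have hlt : (∑ s', ∑ i ∈ Finset.range t, α i s') < ∑ s', (N t s' : ℝ) :=
              Finset.sum_lt_sum_of_nonempty Finset.univ_nonempty (fun s' _ => h s')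
            rw [hsumα, hsumNR] at hlt
            linarith
          obtain ⟨s', hs'⟩ := hex
          have h1 : (1:ℝ) ≤ (∑ i ∈ Finset.range t, α i s') / (N t s' : ℝ) :=
            (le_div_iff₀ (hpos s')).mpr (by linarith)
          have h2 := hmatch t ht hf s'
          rw [hs] at h2
          have h3 : (1:ℝ) ≤ (∑ i ∈ Finset.range t, α i s) / (N t s : ℝ) := le_trans h1 h2
          have h4 : (N t s : ℝ) ≤ ∑ i ∈ Finset.range t, α i s := by
            rw [le_div_iff₀ (hpos s)] at h3; linarith
          refine le_max_of_le_left ?_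
          rw [hv]
          push_cast
          have := hmono t s
          linarith
      · have hv : N (t+1) s = N t s := by rw [hNsucc]; simp [hs]
        rw [hv]
        refine le_trans (IH s) (max_le_max ?_ ?_)
        · linarith [hmono t s]
        · have := hsq t; push_cast at this ⊢; linarith
  intro t ht s
  refine ⟨?_, hub t ht s⟩
  have key : ∀ s', (N t s' : ℝ) ≤ (∑ i ∈ Finset.range t, α i s') + (Real.sqrt t + 2) := by
    intro s'
    refine le_trans (hub t ht s') (max_le ?_ ?_)
    · linarith [Real.sqrt_nonneg (t:ℝ)]
    · have := Finset.sum_nonneg (fun i (_ : i ∈ Finset.range t) => hα0 i s')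
      linarith
  have hsplitN : (N t s : ℝ) + ∑ s' ∈ Finset.univ.erase s, (N t s' : ℝ) = t := by
    rw [Finset.add_sum_erase Finset.univ (fun s' => (N t s' : ℝ)) (Finset.mem_univ s)]
    exact hsumNR t
  have hsplitα : (∑ i ∈ Finset.range t, α i s)
      + ∑ s' ∈ Finset.univ.erase s, (∑ i ∈ Finset.range t, α i s') = t := by
    rw [Finset.add_sum_erase Finset.univ (fun s' => ∑ i ∈ Finset.range t, α i s')
      (Finset.mem_univ s)]
    exact hsumα t
  have hsumle : ∑ s' ∈ Finset.univ.erase s, (N t s' : ℝ)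
      ≤ (∑ s' ∈ Finset.univ.erase s, (∑ i ∈ Finset.range t, α i s'))
        + ((Fintype.card I : ℝ) - 1) * (Real.sqrt t + 2) := by
    calc ∑ s' ∈ Finset.univ.erase s, (N t s' : ℝ)
        ≤ ∑ s' ∈ Finset.univ.erase s,
            ((∑ i ∈ Finset.range t, α i s') + (Real.sqrt t + 2)) :=
          Finset.sum_le_sum (fun s' _ => key s')
      _ = (∑ s' ∈ Finset.univ.erase s, (∑ i ∈ Finset.range t, α i s'))
            + ((Fintype.card I : ℝ) - 1) * (Real.sqrt t + 2) := by
          rw [Finset.sum_add_distrib, Finset.sum_const, nsmul_eq_mul,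
            Finset.card_erase_of_mem (Finset.mem_univ s), Finset.card_univ,
            Nat.cast_sub hK1]
          norm_num
  linarith
end

section
/- Let R ∈ ℝ^{m×n} be a matrix with nonnegative entries. Then sup over α in the probability simplex Δₙ of min_{i∈[m]} (Rα)_i equals inf over w in the probability simplex Δₘ of max_{j∈[n]} (wᵀR)_j. -/
open Finset

/-- Pointwise weak duality for matrix games. -/
lemma stmt_7_weak (m n : ℕ) (hem : (Finset.univ : Finset (Fin m)).Nonempty)
    (hen : (Finset.univ : Finset (Fin n)).Nonempty)
    (R : Fin m → Fin n → ℝ)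
    (α : Fin n → ℝ) (hα : α ∈ stdSimplex ℝ (Fin n))
    (w : Fin m → ℝ) (hw : w ∈ stdSimplex ℝ (Fin m)) :
    Finset.univ.inf' hem (fun i => ∑ j, α j * R i j)
      ≤ Finset.univ.sup' hen (fun j => ∑ i, w i * R i j) := by
  have h1 : Finset.univ.inf' hem (fun i => ∑ j, α j * R i j)
      ≤ ∑ i, w i * (∑ j, α j * R i j) := by
    calc Finset.univ.inf' hem (fun i => ∑ j, α j * R i j)
        = ∑ i, w i * Finset.univ.inf' hem (fun i => ∑ j, α j * R i j) := by
          rw [← Finset.sum_mul, hw.2, one_mul]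
      _ ≤ ∑ i, w i * (∑ j, α j * R i j) :=
          Finset.sum_le_sum fun i _ =>
            mul_le_mul_of_nonneg_left (Finset.inf'_le _ (Finset.mem_univ i)) (hw.1 i)
  have h2 : ∑ i, w i * (∑ j, α j * R i j) = ∑ j, α j * (∑ i, w i * R i j) := by
    simp_rw [Finset.mul_sum]
    rw [Finset.sum_comm]
    exact Finset.sum_congr rfl fun j _ => Finset.sum_congr rfl fun i _ => by ring
  have h3 : ∑ j, α j * (∑ i, w i * R i j)
      ≤ Finset.univ.sup' hen (fun j => ∑ i, w i * R i j) := by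
    calc ∑ j, α j * (∑ i, w i * R i j)
        ≤ ∑ j, α j * Finset.univ.sup' hen (fun j => ∑ i, w i * R i j) :=
          Finset.sum_le_sum fun j _ =>
            mul_le_mul_of_nonneg_left
              (Finset.le_sup' (fun j => ∑ i, w i * R i j) (Finset.mem_univ j)) (hα.1 j)
      _ = Finset.univ.sup' hen (fun j => ∑ i, w i * R i j) := by
          rw [← Finset.sum_mul, hα.2, one_mul]
  linarith

/-- **Von Neumann minimax duality for matrix games with mixed strategies.**
For a nonnegative matrix `R`, the max-min value over mixed column strategies
equals the min-max value over mixed row strategies. -/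
theorem stmt_7 (m n : ℕ) (hm : 0 < m) (hn : 0 < n)
    (R : Fin m → Fin n → ℝ) (hR : ∀ i j, 0 ≤ R i j) :
    (⨆ α : stdSimplex ℝ (Fin n),
        Finset.univ.inf' (Finset.univ_nonempty_iff.mpr (Fin.pos_iff_nonempty.mp hm))
          (fun i => ∑ j, α.1 j * R i j))
    = (⨅ w : stdSimplex ℝ (Fin m),
        Finset.univ.sup' (Finset.univ_nonempty_iff.mpr (Fin.pos_iff_nonempty.mp hn))
          (fun j => ∑ i, w.1 i * R i j)) := by
  have hem : (Finset.univ : Finset (Fin m)).Nonempty :=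
    Finset.univ_nonempty_iff.mpr (Fin.pos_iff_nonempty.mp hm)
  have hen : (Finset.univ : Finset (Fin n)).Nonempty :=
    Finset.univ_nonempty_iff.mpr (Fin.pos_iff_nonempty.mp hn)
  -- canonical elements of the simplices
  have huni : ∀ k : ℕ, 0 < k → (fun _ : Fin k => (k : ℝ)⁻¹) ∈ stdSimplex ℝ (Fin k) := by
    intro k hk
    constructor
    · intro x; positivity
    · simp [Finset.sum_const, Finset.card_univ]
      field_simp
  haveI hNn : Nonempty (stdSimplex ℝ (Fin n)) := ⟨⟨_, huni n hn⟩⟩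
  haveI hNm : Nonempty (stdSimplex ℝ (Fin m)) := ⟨⟨_, huni m hm⟩⟩
  set F : stdSimplex ℝ (Fin n) → ℝ :=
    fun α => Finset.univ.inf' hem (fun i => ∑ j, α.1 j * R i j) with hFdef
  set G : stdSimplex ℝ (Fin m) → ℝ :=
    fun w => Finset.univ.sup' hen (fun j => ∑ i, w.1 i * R i j) with hGdef
  have key : ∀ α w, F α ≤ G w := fun α w =>
    stmt_7_weak m n hem hen R α.1 α.2 w.1 w.2
  have hbddA : BddAbove (Set.range F) := by
    refine ⟨G (Classical.arbitrary _), ?_⟩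
    rintro x ⟨α, rfl⟩
    exact key α _
  have hbddB : BddBelow (Set.range G) := by
    refine ⟨F (Classical.arbitrary _), ?_⟩
    rintro x ⟨w, rfl⟩
    exact key _ w
  show (⨆ α, F α) = ⨅ w, G w
  refine le_antisymm (ciSup_le fun α => le_ciInf fun w => key α w) ?_
  refine le_of_forall_pos_le_add fun ε hε => ?_
  set c : ℝ := (⨆ α, F α) + ε with hcdef
  -- it suffices to exhibit a mixed row strategy with value ≤ c
  suffices h : ∃ w : stdSimplex ℝ (Fin m), G w ≤ c from by
    obtain ⟨w, hwle⟩ := h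
    exact le_trans (ciInf_le hbddB w) hwle
  have hc0 : 0 < c := by
    have h0 : 0 ≤ F (Classical.arbitrary _) := by
      simp only [hFdef]
      refine Finset.le_inf' _ _ fun i _ => Finset.sum_nonneg fun j _ => ?_
      exact mul_nonneg ((Classical.arbitrary (stdSimplex ℝ (Fin n))).2.1 j) (hR i j)
    have h1 : F (Classical.arbitrary _) ≤ ⨆ α, F α := le_ciSup hbddA _
    linarith
  -- the linear map α ↦ Rα
  set T : (Fin n → ℝ) →ₗ[ℝ] (Fin m → ℝ) :=
    { toFun := fun α i => ∑ j, α j * R i j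
      map_add' := by
        intro x y; funext i
        simp [add_mul, Finset.sum_add_distrib]
      map_smul' := by
        intro r x; funext i
        simp [Finset.mul_sum, mul_assoc] } with hTdef
  have hTapp : ∀ α i, T α i = ∑ j, α j * R i j := fun α i => rfl
  set s : Set (Fin m → ℝ) := T '' stdSimplex ℝ (Fin n) with hsdef
  set t : Set (Fin m → ℝ) := {x | ∀ i, c ≤ x i} with htdef
  have hscv : Convex ℝ s := (convex_stdSimplex ℝ (Fin n)).linear_image T
  have hscp : IsCompact s := by
    refine (isCompact_stdSimplex ℝ (Fin n)).image ?_
    show Continuous fun α : Fin n → ℝ => fun i => ∑ j, α j * R i j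
    exact continuous_pi fun i => continuous_finset_sum _ fun j _ =>
      (continuous_apply j).mul continuous_const
  have htcv : Convex ℝ t := by
    intro x hx y hy a b ha hb hab
    intro i
    have hx' := hx i
    have hy' := hy i
    have : a * c + b * c ≤ a * x i + b * y i := by
      have := mul_le_mul_of_nonneg_left hx' ha
      have := mul_le_mul_of_nonneg_left hy' hb
      linarith
    simpa [hab, ← add_mul] using le_trans (by nlinarith) this
  have htcl : IsClosed t := by
    have : t = ⋂ i, {x : Fin m → ℝ | c ≤ x i} := by
      ext x; simp [htdef]
    rw [this]
    exact isClosed_iInter fun i => isClosed_le continuous_const (continuous_apply i)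
  have hdisj : Disjoint s t := by
    rw [Set.disjoint_left]
    rintro x ⟨α, hα, rfl⟩ hxt
    have h1 : F ⟨α, hα⟩ < c := by
      have := le_ciSup hbddA (⟨α, hα⟩ : stdSimplex ℝ (Fin n))
      simp only [hcdef]; linarith
    have h2 : c ≤ F ⟨α, hα⟩ := by
      refine Finset.le_inf' _ _ fun i _ => ?_
      exact hxt i
    linarith
  obtain ⟨f, u, v, hfu, huv, hvf⟩ :=
    geometric_hahn_banach_compact_closed hscv hscp htcv htcl hdisj
  -- the weights extracted from f
  set e : Fin m → (Fin m → ℝ) := fun i => fun j => if i = j then (1 : ℝ) else 0 with hedef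
  set w : Fin m → ℝ := fun i => f (e i) with hwdef
  have feval : ∀ x : Fin m → ℝ, f x = ∑ i, x i * w i := by
    intro x
    conv_lhs => rw [pi_eq_sum_univ x]
    rw [map_sum]
    exact Finset.sum_congr rfl fun i _ => by
      rw [ContinuousLinearMap.map_smul]; simp [hwdef, hedef, smul_eq_mul]
  set x₀ : Fin m → ℝ := fun _ => c with hx₀def
  have hx₀t : x₀ ∈ t := fun i => le_refl c
  have hx₀f : v < f x₀ := hvf x₀ hx₀t
  -- nonnegativity of weights
  have hw0 : ∀ i, 0 ≤ w i := by
    intro i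
    by_contra hneg
    push_neg at hneg
    set τ : ℝ := (f x₀ - v + 1) / (-w i) with hτdef
    have hτ0 : 0 ≤ τ := by
      apply div_nonneg <;> linarith
    have hmem : x₀ + τ • e i ∈ t := by
      intro i'
      simp only [Pi.add_apply, Pi.smul_apply, hedef, hx₀def, smul_eq_mul]
      by_cases h : i = i' <;> simp [h] <;> linarith
    have hwne : w i ≠ 0 := ne_of_lt hneg
    have hτw : τ * w i = -(f x₀ - v + 1) := by
      rw [hτdef, div_mul_eq_mul_div, div_neg, mul_div_assoc, div_self hwne, mul_one]
    have h2 : v < f x₀ + τ * w i := by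
      have h := hvf _ hmem
      rw [map_add, ContinuousLinearMap.map_smul, smul_eq_mul] at h
      exact h
    linarith
  -- the total weight is strictly positive
  have hS0 : 0 ≤ ∑ i, w i := Finset.sum_nonneg fun i _ => hw0 i
  have hfx₀ : f x₀ = c * ∑ i, w i := by
    rw [feval x₀, Finset.mul_sum]
  have hS : 0 < ∑ i, w i := by
    rcases lt_or_eq_of_le hS0 with h | h
    · exact h
    · exfalso
      have hall : ∀ i ∈ Finset.univ, w i = 0 := by
        intro i _
        have := (Finset.sum_eq_zero_iff_of_nonneg (fun i _ => hw0 i)).1 h.symm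
        exact this i (Finset.mem_univ i)
      have hα₀ : (fun _ : Fin n => (n : ℝ)⁻¹) ∈ stdSimplex ℝ (Fin n) := huni n hn
      have hmem : T (fun _ : Fin n => (n : ℝ)⁻¹) ∈ s := ⟨_, hα₀, rfl⟩
      have h1 := hfu _ hmem
      have h2 : f (T fun _ : Fin n => (n : ℝ)⁻¹) = 0 := by
        rw [feval]
        exact Finset.sum_eq_zero fun i hi => by rw [hall i hi, mul_zero]
      have h3 : f x₀ = 0 := by
        rw [hfx₀, ← h, mul_zero]
      linarith
  -- the normalized weights give a good row strategy
  set w' : Fin m → ℝ := fun i => w i / (∑ i, w i) with hw'def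
  have hw's : w' ∈ stdSimplex ℝ (Fin m) := by
    constructor
    · intro i; exact div_nonneg (hw0 i) hS0
    · rw [← Finset.sum_div, div_self (ne_of_gt hS)]
  refine ⟨⟨w', hw's⟩, ?_⟩
  refine Finset.sup'_le _ _ fun j _ => ?_
  -- evaluate f on the j-th column of R
  have hδ : (fun j' => if j = j' then (1 : ℝ) else 0) ∈ stdSimplex ℝ (Fin n) :=
    ite_eq_mem_stdSimplex ℝ j
  have hcol : T (fun j' => if j = j' then (1 : ℝ) else 0) = fun i => R i j := by
    funext i
    rw [hTapp]
    simp [ite_mul]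
  have hmem : (fun i => R i j) ∈ s := ⟨_, hδ, by rw [hcol]⟩
  have h1 : f (fun i => R i j) < f x₀ := lt_trans (lt_trans (hfu _ hmem) huv) hx₀f
  rw [feval, hfx₀] at h1
  -- divide by the total weight
  have h2 : (∑ i, R i j * w i) / (∑ i, w i) ≤ c := by
    rw [div_le_iff₀ hS]; linarith
  calc ∑ i, w' i * R i j = (∑ i, R i j * w i) / (∑ i, w i) := by
        rw [Finset.sum_div]
        exact Finset.sum_congr rfl fun i _ => by rw [hw'def]; ring
    _ ≤ c := h2
end

section
/- Let a > 1 and n be positive integers with ℓ = ⌈log_a n⌉. There exists an injective labeling L : {1,...,n} → {0,1,...,a}^ℓ (strings of length ℓ over an alphabet of size a+1) such that in every string position, each letter of the alphabet is used at most ⌈n/a⌉ times across the n labels. -/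
private lemma div_mod_inj' {m x y : ℕ} (h1 : x / m = y / m) (h2 : x % m = y % m) : x = y := by
  have hx := Nat.div_add_mod x m
  have hy := Nat.div_add_mod y m
  rw [h1, h2] at hx
  omega

private lemma key (a : ℕ) (ha : 1 < a) : ∀ n, 0 < n →
    ∃ L : Fin n → (Fin (Nat.clog a n) → Fin (a + 1)),
      Function.Injective L ∧
      ∀ (p : Fin (Nat.clog a n)) (letter : Fin (a + 1)),
        (Finset.univ.filter (fun x : Fin n => L x p = letter)).card ≤ (n + a - 1) / a := by
  intro n
  induction n using Nat.strong_induction_on with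
  | _ n ih =>
  intro hn
  rcases le_or_gt n 1 with h1 | h1
  · -- n = 1
    have hn1 : n = 1 := le_antisymm h1 hn
    subst hn1
    refine ⟨fun _ _ => 0, fun x y _ => Subsingleton.elim x y, fun p v => ?_⟩
    have hd : (1 + a - 1) / a = 1 := by
      have h : 1 + a - 1 = a := by omega
      rw [h, Nat.div_self (by omega)]
    rw [hd]
    calc (Finset.univ.filter fun x : Fin 1 => (0 : Fin (a+1)) = v).card
        ≤ (Finset.univ : Finset (Fin 1)).card := Finset.card_filter_le _ _
      _ = 1 := by simp
  · -- n ≥ 2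
    set m := (n + a - 1) / a with hm
    have hdm : a * m + (n + a - 1) % a = n + a - 1 := Nat.div_add_mod _ _
    have hr : (n + a - 1) % a < a := Nat.mod_lt _ (by omega)
    have han : a + n ≤ a * n := Nat.add_le_mul ha h1
    have hm1 : 0 < m := by
      rcases Nat.eq_zero_or_pos m with h | h
      · rw [h, Nat.mul_zero] at hdm; omega
      · exact h
    have hnam : n ≤ a * m := by omega
    have hmn : m < n := lt_of_mul_lt_mul_left (show a * m < a * n by omega) (Nat.zero_le a)
    have hclog : Nat.clog a n = Nat.clog a m + 1 := Nat.clog_of_two_le ha h1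
    obtain ⟨L', hinj', -⟩ := ih m hmn hm1
    rw [hclog]
    have hdiv : ∀ x : Fin n, (x : ℕ) / m < a := by
      intro x
      rw [Nat.div_lt_iff_lt_mul hm1]
      exact lt_of_lt_of_le x.2 (by omega)
    set md : Fin n → Fin m := fun x => ⟨(x : ℕ) % m, Nat.mod_lt _ hm1⟩ with hmd
    set L : Fin n → Fin (Nat.clog a m + 1) → Fin (a + 1) := fun x =>
      Fin.cons ⟨(x : ℕ) / m, lt_trans (hdiv x) (Nat.lt_succ_self a)⟩
        (fun q => L' (md x) q + (⟨(x : ℕ) / m, lt_trans (hdiv x) (Nat.lt_succ_self a)⟩ : Fin (a+1)))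
      with hL
    refine ⟨L, ?_, ?_⟩
    · intro x y hxy
      have h0 : (x : ℕ) / m = (y : ℕ) / m := by
        have h := congrFun hxy 0
        simp only [hL, Fin.cons_zero, Fin.mk.injEq] at h
        exact h
      have hs : L' (md x) = L' (md y) := by
        funext q
        have h := congrFun hxy q.succ
        simp only [hL, Fin.cons_succ] at h
        have h0' : (⟨(x : ℕ) / m, lt_trans (hdiv x) (Nat.lt_succ_self a)⟩ : Fin (a+1))
            = ⟨(y : ℕ) / m, lt_trans (hdiv y) (Nat.lt_succ_self a)⟩ := Fin.ext h0
        rw [h0'] at h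
        exact add_right_cancel h
      have hmod : (x : ℕ) % m = (y : ℕ) % m := by
        have h := hinj' hs
        simpa [hmd, Fin.ext_iff] using h
      exact Fin.ext (div_mod_inj' h0 hmod)
    · intro p v
      refine Fin.cases ?_ ?_ p
      · -- position 0
        have h : (Finset.univ.filter fun x : Fin n => L x 0 = v).card
            ≤ (Finset.univ : Finset (Fin m)).card := by
          apply Finset.card_le_card_of_injOn md
          · intro x _; exact Finset.mem_univ _
          · intro x hx y hy hxy
            simp only [hL, Finset.mem_coe, Finset.mem_filter, Fin.cons_zero] at hx hy
            have hx0 : (x : ℕ) / m = (v : ℕ) := congrArg Fin.val hx.2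
            have hy0 : (y : ℕ) / m = (v : ℕ) := congrArg Fin.val hy.2
            have hmod : (x : ℕ) % m = (y : ℕ) % m := by
              simpa [hmd, Fin.ext_iff] using hxy
            exact Fin.ext (div_mod_inj' (hx0.trans hy0.symm) hmod)
        simpa using h
      · -- successor positions
        intro q
        set C : Fin (a + 1) → ℕ := fun w =>
          (Finset.univ.filter fun y : Fin m => L' y q = w).card with hC
        have htot : ∑ w : Fin (a + 1), C w = m := by
          have h := Finset.card_eq_sum_card_fiberwise
            (f := fun y : Fin m => L' y q) (s := Finset.univ) (t := Finset.univ)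
            (fun y _ => Finset.mem_univ _)
          simpa [hC] using h.symm
        have hsplit : (Finset.univ.filter fun x : Fin n => L x q.succ = v).card
            = ∑ i : Fin a, ((Finset.univ.filter fun x : Fin n => L x q.succ = v).filter
                (fun x : Fin n => (⟨(x : ℕ) / m, hdiv x⟩ : Fin a) = i)).card :=
          Finset.card_eq_sum_card_fiberwise
            (f := fun x : Fin n => (⟨(x : ℕ) / m, hdiv x⟩ : Fin a))
            (fun x _ => Finset.mem_univ _)
        have hfib : ∀ i : Fin a,
            ((Finset.univ.filter fun x : Fin n => L x q.succ = v).filter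
                (fun x : Fin n => (⟨(x : ℕ) / m, hdiv x⟩ : Fin a) = i)).card
              ≤ C (v - i.castSucc) := by
          intro i
          apply Finset.card_le_card_of_injOn md
          · intro x hx
            simp only [Finset.mem_coe, Finset.mem_filter, hL, Fin.cons_succ] at hx
            obtain ⟨⟨-, hx1⟩, hx2⟩ := hx
            have hxi : (⟨(x : ℕ) / m, lt_trans (hdiv x) (Nat.lt_succ_self a)⟩ : Fin (a+1))
                = i.castSucc := by
              apply Fin.ext
              simpa [Fin.ext_iff] using congrArg Fin.val hx2
            rw [hxi] at hx1
            simp only [hC, Finset.mem_coe, Finset.mem_filter]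
            exact ⟨Finset.mem_univ _, eq_sub_of_add_eq hx1⟩
          · intro x hx y hy hxy
            simp only [Finset.mem_coe, Finset.mem_filter] at hx hy
            have hxi : (x : ℕ) / m = (i : ℕ) := by
              simpa [Fin.ext_iff] using congrArg Fin.val hx.2
            have hyi : (y : ℕ) / m = (i : ℕ) := by
              simpa [Fin.ext_iff] using congrArg Fin.val hy.2
            have hmod : (x : ℕ) % m = (y : ℕ) % m := by
              simpa [hmd, Fin.ext_iff] using hxy
            exact Fin.ext (div_mod_inj' (hxi.trans hyi.symm) hmod)
        have hinj_e : Function.Injective (fun i : Fin a => v - i.castSucc) := by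
          intro i j hij
          have h : i.castSucc = j.castSucc := sub_right_injective hij
          exact Fin.castSucc_injective a h
        have hsum : ∑ i : Fin a, C (v - i.castSucc) ≤ ∑ w : Fin (a + 1), C w := by
          rw [← Finset.sum_image (f := C) (g := fun i : Fin a => v - i.castSucc)
            (fun i _ j _ h => hinj_e h)]
          exact Finset.sum_le_sum_of_subset (Finset.subset_univ _)
        calc (Finset.univ.filter fun x : Fin n => L x q.succ = v).card
            = _ := hsplit
          _ ≤ ∑ i : Fin a, C (v - i.castSucc) := Finset.sum_le_sum (fun i _ => hfib i)
          _ ≤ ∑ w : Fin (a + 1), C w := hsum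
          _ = m := htot

/-- **Balanced labeling procedure.**
For `a > 1` and `n ≥ 1` with `ℓ = ⌈log_a n⌉`, there is an injective labeling of
`{1,…,n}` by strings of length `ℓ` over the alphabet `{0,1,…,a}` such that in
every position each letter is used at most `⌈n/a⌉` times. -/
theorem stmt_12 (a n : ℕ) (ha : 1 < a) (hn : 0 < n) :
    ∃ L : Fin n → (Fin (Nat.clog a n) → Fin (a + 1)),
      Function.Injective L ∧
      ∀ (p : Fin (Nat.clog a n)) (letter : Fin (a + 1)),
        (Finset.univ.filter (fun x : Fin n => L x p = letter)).card ≤ (n + a - 1) / a := by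
  exact key a ha n hn
end

section
/- Let n and k be positive integers with k < n/2, and set a = ⌈n/k⌉. Then there exists a family S of subsets of {1,...,n}, each of size at most k, such that for every pair of distinct elements x, y ∈ {1,...,n} there is a set S ∈ S containing exactly one of x and y, and |S| ≤ ⌈n/k⌉ · ⌈log_{⌈n/k⌉} n⌉. -/
/-- Ceiling division: `n ≤ d * ⌈n/d⌉`. -/
private lemma ceil_div_le_mul (n d : ℕ) (hd : 0 < d) : n ≤ d * ((n + d - 1) / d) := by
  have h1 := Nat.div_add_mod (n + d - 1) d
  have h2 : (n + d - 1) % d < d := Nat.mod_lt _ hd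
  omega

/-- Ceiling division lower bound: if `n ≤ d * q` then `⌈n/d⌉ ≤ q`. -/
private lemma ceil_div_le (n d q : ℕ) (hd : 0 < d) (h : n ≤ d * q) :
    (n + d - 1) / d ≤ q := by
  rw [Nat.div_le_iff_le_mul_add_pred hd]
  omega

/-- Two numbers below `m ^ t` with the same base-`m` digits are equal. -/
private lemma digits_ext (m : ℕ) (hm : 0 < m) :
    ∀ t v w, v < m ^ t → w < m ^ t →
      (∀ p < t, v / m ^ p % m = w / m ^ p % m) → v = w := by
  intro t
  induction t with
  | zero =>
    intro v w hv hw _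
    simp only [pow_zero, Nat.lt_one_iff] at hv hw
    omega
  | succ t ih =>
    intro v w hv hw h
    have h0 : v % m = w % m := by simpa using h 0 (by omega)
    have hd : v / m = w / m := by
      apply ih
      · rw [Nat.div_lt_iff_lt_mul hm, ← pow_succ]; exact hv
      · rw [Nat.div_lt_iff_lt_mul hm, ← pow_succ]; exact hw
      · intro p hp
        have := h (p + 1) (by omega)
        rw [Nat.div_div_eq_div_mul, Nat.div_div_eq_div_mul, ← pow_succ']
        exact this
    have e1 := Nat.div_add_mod v m
    have e2 := Nat.div_add_mod w m
    rw [hd, h0] at e1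
    omega

/-- **Existence of small `(n,k)`-separating systems.**
For `k < n/2`, there is a family of subsets of `{1,…,n}` of size at most `k`
each, separating every pair of distinct elements, with at most
`⌈n/k⌉·⌈log_{⌈n/k⌉} n⌉` members. -/
theorem stmt_13 (n k : ℕ) (hk : 0 < k) (hkn : 2 * k < n) :
    ∃ 𝒮 : Finset (Finset (Fin n)),
      (∀ S ∈ 𝒮, S.card ≤ k) ∧
      (∀ x y : Fin n, x ≠ y →
        ∃ S ∈ 𝒮, (x ∈ S ∧ y ∉ S) ∨ (x ∉ S ∧ y ∈ S)) ∧
      𝒮.card ≤ ((n + k - 1) / k) * Nat.clog ((n + k - 1) / k) n := by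
  set a := (n + k - 1) / k with ha
  -- basic facts about a
  have ha3 : 3 ≤ a := by
    rw [ha, Nat.le_div_iff_mul_le hk]; omega
  have hm : 0 < a + 1 := by omega
  have hak : n ≤ a * k := by
    have h1 := ceil_div_le_mul n k hk
    have h2 : k * ((n + k - 1) / k) = a * k := by rw [← ha, mul_comm]
    omega
  set c := (n + a) / (a + 1) with hc
  have hcdef : c = (n + (a + 1) - 1) / (a + 1) := by rw [hc]; congr 1
  have hcn : n ≤ (a + 1) * c := by rw [hcdef]; exact ceil_div_le_mul n (a + 1) hm
  have hck : c ≤ k := by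
    rw [hcdef]
    refine ceil_div_le n (a + 1) k hm ?_
    have h2 : a * k ≤ (a + 1) * k := Nat.mul_le_mul_right _ (by omega)
    omega
  have hc0 : 0 < c := by
    rcases Nat.eq_zero_or_pos c with h | h
    · have h2 := hcn
      rw [h, mul_zero] at h2
      omega
    · exact h
  set ℓ := Nat.clog a n with hℓ
  have hℓ1 : 1 ≤ ℓ := Nat.clog_pos (by omega) (by omega)
  have hpow : n ≤ a ^ ℓ := Nat.le_pow_clog (by omega) n
  have hcpow : c ≤ (a + 1) ^ (ℓ - 1) := by
    have h1 : c ≤ a ^ (ℓ - 1) := by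
      rw [hcdef]
      apply ceil_div_le n (a + 1) _ hm
      calc n ≤ a ^ ℓ := hpow
        _ = a ^ (ℓ - 1) * a := by
            rw [← pow_succ, Nat.sub_add_cancel hℓ1]
        _ ≤ (a + 1) * a ^ (ℓ - 1) := by rw [mul_comm (a + 1)]; exact Nat.mul_le_mul_left _ (Nat.le_succ a)
    calc c ≤ a ^ (ℓ - 1) := h1
      _ ≤ (a + 1) ^ (ℓ - 1) := Nat.pow_le_pow_left (by omega) _
  -- the labeling
  set L : ℕ → Fin n → ℕ := fun p x =>
    if p = 0 then x.val / c
    else (x.val % c / (a + 1) ^ (p - 1) % (a + 1) + x.val / c) % (a + 1) with hL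
  have hu_lt : ∀ x : Fin n, x.val / c < a + 1 := by
    intro x
    rw [Nat.div_lt_iff_lt_mul hc0]
    calc x.val < n := x.isLt
      _ ≤ (a + 1) * c := hcn
  have hL_lt : ∀ p (x : Fin n), L p x < a + 1 := by
    intro p x
    rw [hL]
    by_cases hp : p = 0
    · simp only [hp, if_pos rfl]; exact hu_lt x
    · simp only [if_neg hp]; exact Nat.mod_lt _ hm
  -- key injectivity: within a fiber of L p, an element is determined by x % c
  have hinj : ∀ p b (x y : Fin n), L p x = b → L p y = b →
      x.val % c = y.val % c → x = y := by
    intro p b x y hx hy hmod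
    have hdiv : x.val / c = y.val / c := by
      simp only [hL] at hx hy
      by_cases hp : p = 0
      · subst hp
        rw [if_pos rfl] at hx hy
        omega
      · rw [if_neg hp] at hx hy
        rw [hmod] at hx
        have hme : (y.val % c / (a + 1) ^ (p - 1) % (a + 1) + x.val / c) % (a + 1)
            = (y.val % c / (a + 1) ^ (p - 1) % (a + 1) + y.val / c) % (a + 1) := by
          rw [hx, hy]
        have hcan := Nat.ModEq.add_left_cancel' _ hme
        have h1 := hu_lt x
        have h2 := hu_lt y
        rwa [Nat.ModEq, Nat.mod_eq_of_lt h1, Nat.mod_eq_of_lt h2] at hcan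
    have e1 := Nat.div_add_mod x.val c
    have e2 := Nat.div_add_mod y.val c
    rw [hdiv, hmod] at e1
    exact Fin.ext (by omega)
  refine ⟨(Finset.range ℓ ×ˢ Finset.Icc 1 a).image
    (fun pb => Finset.univ.filter (fun x => L pb.1 x = pb.2)), ?_, ?_, ?_⟩
  · -- sizes
    intro S hS
    obtain ⟨pb, _, rfl⟩ := Finset.mem_image.mp hS
    calc (Finset.univ.filter (fun x => L pb.1 x = pb.2)).card
        ≤ (Finset.range c).card := by
          apply Finset.card_le_card_of_injOn (fun x => x.val % c)
          · intro x _
            exact Finset.mem_range.mpr (Nat.mod_lt _ hc0)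
          · intro x hx y hy hxy
            simp only [Finset.coe_filter, Set.mem_setOf_eq] at hx hy
            exact hinj pb.1 pb.2 x y hx.2 hy.2 hxy
      _ = c := Finset.card_range c
      _ ≤ k := hck
  · -- separation
    intro x y hxy
    -- find a position where the labels differ
    have hexists : ∃ p < ℓ, L p x ≠ L p y := by
      by_cases h0 : x.val / c = y.val / c
      · -- same block: digits of x % c and y % c differ somewhere
        have hv : x.val % c ≠ y.val % c := by
          intro h
          apply hxy
          have e1 := Nat.div_add_mod x.val c
          have e2 := Nat.div_add_mod y.val c
          rw [h0, h] at e1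
          exact Fin.ext (by omega)
        have hvd : ∃ p < ℓ - 1,
            x.val % c / (a + 1) ^ p % (a + 1) ≠ y.val % c / (a + 1) ^ p % (a + 1) := by
          by_contra hcon
          push_neg at hcon
          exact hv (digits_ext (a + 1) hm (ℓ - 1) _ _
            (lt_of_lt_of_le (Nat.mod_lt _ hc0) hcpow)
            (lt_of_lt_of_le (Nat.mod_lt _ hc0) hcpow) hcon)
        obtain ⟨p, hp, hd⟩ := hvd
        refine ⟨p + 1, by omega, ?_⟩
        simp only [hL]
        rw [if_neg (by omega : ¬ (p + 1 = 0)), if_neg (by omega : ¬ (p + 1 = 0))]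
        simp only [Nat.add_sub_cancel]
        intro heq
        apply hd
        rw [h0] at heq
        have hcan := (Nat.ModEq.add_right_cancel' _ heq)
        have h1 : x.val % c / (a + 1) ^ p % (a + 1) < a + 1 := Nat.mod_lt _ hm
        have h2 : y.val % c / (a + 1) ^ p % (a + 1) < a + 1 := Nat.mod_lt _ hm
        rwa [Nat.ModEq, Nat.mod_eq_of_lt h1, Nat.mod_eq_of_lt h2] at hcan
      · refine ⟨0, by omega, ?_⟩
        simp only [hL]
        simpa using h0
    obtain ⟨p, hp, hd⟩ := hexists
    by_cases hx0 : L p x = 0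
    · -- then L p y ≠ 0; use the fiber of (p, L p y)
      refine ⟨Finset.univ.filter (fun z => L p z = L p y), ?_, ?_⟩
      · apply Finset.mem_image.mpr
        refine ⟨(p, L p y), ?_, rfl⟩
        rw [Finset.mem_product, Finset.mem_range, Finset.mem_Icc]
        have := hL_lt p y
        constructor
        · exact hp
        · omega
      · right
        constructor
        · simp only [Finset.mem_filter, Finset.mem_univ, true_and]
          exact hd
        · simp
    · refine ⟨Finset.univ.filter (fun z => L p z = L p x), ?_, ?_⟩
      · apply Finset.mem_image.mpr
        refine ⟨(p, L p x), ?_, rfl⟩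
        rw [Finset.mem_product, Finset.mem_range, Finset.mem_Icc]
        have := hL_lt p x
        constructor
        · exact hp
        · omega
      · left
        constructor
        · simp
        · simp only [Finset.mem_filter, Finset.mem_univ, true_and]
          exact fun h => hd h.symm
  · -- cardinality
    calc ((Finset.range ℓ ×ˢ Finset.Icc 1 a).image
          (fun pb => Finset.univ.filter (fun x => L pb.1 x = pb.2))).card
        ≤ (Finset.range ℓ ×ˢ Finset.Icc 1 a).card := Finset.card_image_le
      _ = ℓ * a := by
          rw [Finset.card_product, Finset.card_range, Nat.card_Icc, Nat.add_sub_cancel]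
      _ ≤ a * ℓ := by rw [mul_comm]
end

section
/- Let D and D* be two DAGs on vertex set V that are Markov equivalent (same skeleton and same v-structures), and let S ⊆ V. Then the interventional DAGs D_S̄ and D*_S̄ (obtained by removing all edges incoming into S) have the same skeleton if and only if D and D* orient every edge of the cut E[S, V∖S] in the same direction. -/
/-- **Interventional skeletons and cut orientations.**
Let `D` and `D*` be Markov equivalent DAGs (same skeleton, same v-structures)
on `V`, and `S ⊆ V`. Then the interventional DAGs `D_S̄` and `D*_S̄`
(all edges into `S` removed) have the same skeleton iff `D` and `D*` orient
every edge of the cut `E[S, V∖S]` in the same direction. -/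
theorem stmt_14 {V : Type*}
    (D Dstar : V → V → Prop)
    (hDacyc : ∀ x, ¬ Relation.TransGen D x x)
    (hDstaracyc : ∀ x, ¬ Relation.TransGen Dstar x x)
    (hskel : ∀ x y, (D x y ∨ D y x) ↔ (Dstar x y ∨ Dstar y x))
    (hvstruct : ∀ x y z,
      (D x z ∧ D y z ∧ x ≠ y ∧ ¬(D x y ∨ D y x)) ↔
      (Dstar x z ∧ Dstar y z ∧ x ≠ y ∧ ¬(Dstar x y ∨ Dstar y x)))
    (S : Set V) :
    (∀ x y, ((D x y ∧ y ∉ S) ∨ (D y x ∧ x ∉ S)) ↔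
            ((Dstar x y ∧ y ∉ S) ∨ (Dstar y x ∧ x ∉ S)))
    ↔ (∀ x y, ((x ∈ S ∧ y ∉ S) ∨ (x ∉ S ∧ y ∈ S)) → (D x y ↔ Dstar x y)) := by
  have nD : ∀ x y, D x y → ¬ D y x := fun x y h h' =>
    hDacyc x (Relation.TransGen.tail (Relation.TransGen.single h) h')
  have nDs : ∀ x y, Dstar x y → ¬ Dstar y x := fun x y h h' =>
    hDstaracyc x (Relation.TransGen.tail (Relation.TransGen.single h) h')
  constructor
  · intro h x y hcut
    constructor
    · intro hD
      rcases hcut with ⟨hxS, hyS⟩ | ⟨hxS, hyS⟩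
      · rcases (h x y).mp (Or.inl ⟨hD, hyS⟩) with ⟨h1, _⟩ | ⟨_, hx⟩
        · exact h1
        · exact absurd hxS hx
      · rcases (hskel x y).mp (Or.inl hD) with h1 | h1
        · exact h1
        · rcases (h y x).mpr (Or.inl ⟨h1, hxS⟩) with ⟨h2, _⟩ | ⟨_, hy⟩
          · exact absurd hD (nD y x h2)
          · exact absurd hyS hy
    · intro hDs
      rcases hcut with ⟨hxS, hyS⟩ | ⟨hxS, hyS⟩
      · rcases (h x y).mpr (Or.inl ⟨hDs, hyS⟩) with ⟨h1, _⟩ | ⟨_, hx⟩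
        · exact h1
        · exact absurd hxS hx
      · rcases (hskel x y).mpr (Or.inl hDs) with h1 | h1
        · exact h1
        · rcases (h y x).mp (Or.inl ⟨h1, hxS⟩) with ⟨h2, _⟩ | ⟨_, hy⟩
          · exact absurd hDs (nDs y x h2)
          · exact absurd hyS hy
  · intro h x y
    constructor
    · rintro (⟨hD, hy⟩ | ⟨hD, hx⟩)
      · by_cases hx : x ∈ S
        · exact Or.inl ⟨(h x y (Or.inl ⟨hx, hy⟩)).mp hD, hy⟩
        · rcases (hskel x y).mp (Or.inl hD) with h1 | h1
          · exact Or.inl ⟨h1, hy⟩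
          · exact Or.inr ⟨h1, hx⟩
      · by_cases hy : y ∈ S
        · exact Or.inr ⟨(h y x (Or.inl ⟨hy, hx⟩)).mp hD, hx⟩
        · rcases (hskel y x).mp (Or.inl hD) with h1 | h1
          · exact Or.inr ⟨h1, hx⟩
          · exact Or.inl ⟨h1, hy⟩
    · rintro (⟨hDs, hy⟩ | ⟨hDs, hx⟩)
      · by_cases hx : x ∈ S
        · exact Or.inl ⟨(h x y (Or.inl ⟨hx, hy⟩)).mpr hDs, hy⟩
        · rcases (hskel x y).mpr (Or.inl hDs) with h1 | h1
          · exact Or.inl ⟨h1, hy⟩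
          · exact Or.inr ⟨h1, hx⟩
      · by_cases hy : y ∈ S
        · exact Or.inr ⟨(h y x (Or.inl ⟨hy, hx⟩)).mpr hDs, hx⟩
        · rcases (hskel y x).mpr (Or.inl hDs) with h1 | h1
          · exact Or.inr ⟨h1, hx⟩
          · exact Or.inl ⟨h1, hy⟩
end
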